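/- Let p be an odd prime and k > 2 with 2k + 1 not a power of p. Then there exists i with 0 < i < k such that C(2k, 2i+1) − 2k is not divisible by p. -/

import Mathlib

/-!
Write `n = 2k` and suppose `C(n, j) ≡ n (mod p)` for every odd `j < n`. By Lucas' theorem
`C(n, p^t)` is congruent to the `t`-th base-`p` digit of `n`, and `p^t` is odd, so every digit
of `n` equals `c = n mod p`. Hence `c ≠ 0`, and `c ≠ p - 1` since otherwise `n + 1` is a power
of `p`. For `p > 3`, Lucas gives `C(c, 3) ≡ C(n, 3) ≡ c`, which forces `(c + 1)(c - 4) ≡ 0`, so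
`c = 4`; for `p = 3` we are left with `c = 1`. Either way the last digit of `5` exceeds `c`,
so `C(n, 5) ≡ 0 ≢ n`.
-/

open Nat

theorem Nat.cast_choose_three_mul_six {R : Type*} [CommRing R] (c : ℕ) :
    (c.choose 3 : R) * 6 = c * (c - 1) * (c - 2) := by
  have h := congrArg (Nat.cast (R := R)) (descFactorial_eq_factorial_mul_choose c 3)
  rw [← descPochhammer_eval_eq_descFactorial] at h
  simp [descPochhammer_succ_eval, factorial] at h
  linear_combination -h

theorem Nat.sub_one_mul_add_eq_of_forall_digit_eq {p n d s : ℕ} (hp : 0 < p) (hn : n < p ^ s)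
    (hd : ∀ t < s, n / p ^ t % p = d) : (p - 1) * n + d = d * p ^ s := by
  suffices key : ∀ r ≤ s, (p - 1) * (n % p ^ r) + d = d * p ^ r by
    simpa [Nat.mod_eq_of_lt hn] using key s le_rfl
  intro r
  induction r with
  | zero => simp [Nat.mod_one]
  | succ r ih =>
    intro hr
    rw [Nat.mod_pow_succ, hd r (by omega), pow_succ]
    obtain ⟨q, rfl⟩ : ∃ q, p = q + 1 := ⟨p - 1, by omega⟩
    simp only [Nat.add_sub_cancel] at ih ⊢
    linear_combination ih (by omega)

namespace Choose

variable {p : ℕ} [Fact p.Prime]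

theorem choose_modEq_choose_mod_of_lt (n : ℕ) {k : ℕ} (hk : k < p) :
    n.choose k ≡ (n % p).choose k [MOD p] := by
  simpa [Nat.mod_eq_of_lt hk, Nat.div_eq_of_lt hk] using
    choose_modEq_choose_mod_mul_choose_div_nat (n := n) (k := k) (p := p)

theorem choose_modEq_zero_of_mod_lt_mod {n k : ℕ} (h : n % p < k % p) :
    n.choose k ≡ 0 [MOD p] := by
  simpa [Nat.choose_eq_zero_of_lt h] using
    choose_modEq_choose_mod_mul_choose_div_nat (n := n) (k := k) (p := p)

theorem choose_pow_modEq_div_pow_mod (n t : ℕ) : n.choose (p ^ t) ≡ n / p ^ t % p [MOD p] := by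
  induction t generalizing n with
  | zero => simpa using (Nat.mod_modEq n p).symm
  | succ t ih =>
    have hp : 0 < p := (Fact.out : p.Prime).pos
    have lucas := choose_modEq_choose_mod_mul_choose_div_nat (n := n) (k := p ^ (t + 1)) (p := p)
    rw [pow_succ', Nat.mul_mod_right, Nat.mul_div_cancel_left _ hp, choose_zero_right,
      one_mul] at lucas
    rw [pow_succ', ← Nat.div_div_eq_div_mul]
    exact lucas.trans (ih (n / p))

end Choose

theorem eq_four_or_succ_eq_of_choose_three_modEq {p c : ℕ} (hp : p.Prime) (hp4 : 4 < p)
    (hc0 : c ≠ 0) (hcp : c < p) (h : c.choose 3 ≡ c [MOD p]) : c = 4 ∨ c + 1 = p := by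
  have := Fact.mk hp
  have hz : (c : ZMod p) * ((c + 1 : ℕ) : ZMod p) * ((c : ZMod p) - 4) = 0 := by
    have h' := (ZMod.natCast_eq_natCast_iff _ _ _).mpr h
    push_cast
    linear_combination 6 * h' - Nat.cast_choose_three_mul_six (R := ZMod p) c
  rcases mul_eq_zero.mp hz with hz | h4
  · rcases mul_eq_zero.mp hz with hc | hc1
    · exact absurd (Nat.le_of_dvd (by omega) ((ZMod.natCast_eq_zero_iff c p).mp hc)) (by omega)
    · exact Or.inr (le_antisymm (by omega)
        (Nat.le_of_dvd (by omega) ((ZMod.natCast_eq_zero_iff _ p).mp hc1)))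
  · have h4 : (c : ZMod p) = ((4 : ℕ) : ZMod p) := by push_cast; linear_combination h4
    exact Or.inl (((ZMod.natCast_eq_natCast_iff _ _ _).mp h4).eq_of_lt_of_lt hcp (by omega))

open Choose

theorem mod_eq_div_pow_mod_of_forall_odd_choose_modEq {p n : ℕ} (hp : p.Prime) (hodd : Odd p)
    (hn : Even n) (H : ∀ j, Odd j → j < n → n.choose j ≡ n [MOD p]) :
    ∀ t < log p n + 1, n / p ^ t % p = n % p := by
  have := Fact.mk hp
  intro t ht
  rcases Nat.eq_zero_or_pos n with rfl | hn0
  · simp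
  have hlt : p ^ t < n := by
    refine (Nat.pow_le_of_le_log hn0.ne' (by omega)).lt_of_ne fun heq => ?_
    exact Nat.not_even_iff_odd.mpr (hodd.pow (n := t)) (heq ▸ hn)
  exact (Nat.mod_eq_of_modEq ((H _ hodd.pow hlt).symm.trans (choose_pow_modEq_div_pow_mod n t))
    (Nat.mod_lt _ hp.pos)).symm

theorem mod_lt_five_mod_of_forall_odd_choose_modEq {p n : ℕ} (hp : p.Prime) (hodd : Odd p)
    (h3 : 3 < n) (H : ∀ j, Odd j → j < n → n.choose j ≡ n [MOD p]) (hc0 : n % p ≠ 0)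
    (hcp : n % p + 1 ≠ p) : n % p < 5 % p := by
  have := Fact.mk hp
  have hp3 : 3 ≤ p := by have := hp.two_le; have := Nat.odd_iff.mp hodd; omega
  rcases hp3.eq_or_lt with rfl | hp3
  · have := Nat.mod_lt n (show 0 < 3 by omega)
    omega
  have hchoose : (n % p).choose 3 ≡ n % p [MOD p] :=
    (choose_modEq_choose_mod_of_lt n hp3).symm.trans
      ((H 3 ⟨1, rfl⟩ h3).trans (Nat.mod_modEq n p).symm)
  have hp4 : 4 < p := by have := Nat.odd_iff.mp hodd; omega
  rcases eq_four_or_succ_eq_of_choose_three_modEq hp hp4 hc0 (Nat.mod_lt _ hp.pos) hchoose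
    with h4 | h4
  · rw [h4, Nat.mod_eq_of_lt (by omega : 5 < p)]
    omega
  · exact absurd h4 hcp

theorem exists_pow_eq_succ_of_forall_odd_choose_modEq {p n : ℕ} (hp : p.Prime) (hodd : Odd p)
    (hn : Even n) (h6 : 6 ≤ n) (H : ∀ j, Odd j → j < n → n.choose j ≡ n [MOD p]) :
    ∃ s, n + 1 = p ^ s := by
  have := Fact.mk hp
  have hrep := Nat.sub_one_mul_add_eq_of_forall_digit_eq hp.pos
    (Nat.lt_pow_succ_log_self hp.one_lt n)
    (mod_eq_div_pow_mod_of_forall_odd_choose_modEq hp hodd hn H)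
  have hp1 : 0 < p - 1 := by have := hp.two_le; omega
  have hc0 : n % p ≠ 0 := by
    intro h0
    rw [h0, zero_mul, add_zero, Nat.mul_eq_zero] at hrep
    omega
  by_cases hcp : n % p + 1 = p
  · refine ⟨log p n + 1, Nat.eq_of_mul_eq_mul_left hp1 ?_⟩
    rw [show n % p = p - 1 by omega] at hrep
    rw [mul_add, mul_one, hrep, mul_comm]
  have h5 := mod_lt_five_mod_of_forall_odd_choose_modEq hp hodd (by omega) H hc0 hcp
  have hn0 : n ≡ 0 [MOD p] :=
    (H 5 ⟨2, rfl⟩ (by omega)).symm.trans (choose_modEq_zero_of_mod_lt_mod h5)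
  exact absurd (Nat.mod_eq_of_modEq hn0 hp.pos) hc0

theorem exists_choose_odd_sub_not_dvd (p k : ℕ) (hp : p.Prime) (hodd : Odd p)
    (hk : 2 < k) (h : ¬ ∃ s : ℕ, 2 * k + 1 = p ^ s) :
    ∃ i : ℕ, 0 < i ∧ i < k ∧
      ¬ ((p : ℤ) ∣ ((2 * k).choose (2 * i + 1) : ℤ) - 2 * k) := by
  by_contra! hcon
  refine h (exists_pow_eq_succ_of_forall_odd_choose_modEq hp hodd (even_two_mul k) (by omega) ?_)
  rintro j ⟨i, rfl⟩ hj
  rcases Nat.eq_zero_or_pos i with rfl | hi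
  · simp [Nat.ModEq.refl]
  · exact (Nat.modEq_iff_dvd.mpr (by exact_mod_cast hcon i hi (by omega))).symm
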